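/- Let n ≥ 1 and let ψ : Fin n × Fin n → ℂ be a maximally entangled unit vector. Then for every integer k ≥ 1, the k-th PT-moment satisfies Tr[((ψψᴴ)^{T_A})^k] = ((n+1) + (n−1)·(−1)^k) / (2·n^{k−1}). -/

import Mathlib

open Matrix Polynomial
open scoped ComplexOrder

noncomputable section

/-- Partial transpose on subsystem A of a bipartite matrix. -/
def ptA {m n : ℕ} (ρ : Matrix (Fin m × Fin n) (Fin m × Fin n) ℂ) :
    Matrix (Fin m × Fin n) (Fin m × Fin n) ℂ :=
  fun p q => ρ (q.1, p.2) (p.1, q.2)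

/-- A density matrix: positive semidefinite with trace one. -/
def IsDensityMatrix {k : Type*} [Fintype k] [DecidableEq k] (ρ : Matrix k k ℂ) : Prop :=
  ρ.PosSemidef ∧ ρ.trace = 1

open Classical in
/-- Minimal (real) eigenvalue of a Hermitian matrix (junk value 0 otherwise). -/
noncomputable def minEig {k : Type*} [Fintype k] [DecidableEq k] (A : Matrix k k ℂ) : ℝ :=
  if h : A.IsHermitian then ⨅ i, h.eigenvalues i else 0

/-- The rank-one projection |ψ⟩⟨ψ| of a vector ψ. -/
def proj {k : Type*} [Fintype k] (ψ : k → ℂ) : Matrix k k ℂ :=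
  Matrix.vecMulVec ψ (star ψ)

/-- A unit vector. -/
def IsUnitVec {k : Type*} [Fintype k] (ψ : k → ℂ) : Prop :=
  ∑ p, ‖ψ p‖ ^ 2 = 1

/-- Reduced matrix on subsystem A of a pure state ψ. -/
def reducedA {n : ℕ} (ψ : Fin n × Fin n → ℂ) : Matrix (Fin n) (Fin n) ℂ :=
  fun i k => ∑ j, ψ (i, j) * (starRingEnd ℂ) (ψ (k, j))

/-- ψ is maximally entangled iff its reduced matrix is (1/n)·identity. -/
def MaxEntangled {n : ℕ} (ψ : Fin n × Fin n → ℂ) : Prop :=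
  reducedA ψ = ((n : ℂ))⁻¹ • (1 : Matrix (Fin n) (Fin n) ℂ)

/-! The partial transpose of `|ψ⟩⟨ψ|` squares to `ρ_Aᵀ ⊗ ρ_B`, the Kronecker product of the two
reduced matrices. For maximally entangled `ψ` both are `1/n`, so `N := (|ψ⟩⟨ψ|)^{T_A}` satisfies
`N² = n⁻² • 1`: odd moments are `n^{-2m} Tr N = n^{-2m}` and even moments `n^{-2m} Tr 1 = n^{2-2m}`. -/

open scoped Kronecker

def reducedB {m n : ℕ} (ψ : Fin m × Fin n → ℂ) : Matrix (Fin n) (Fin n) ℂ :=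
  fun j l => ∑ i, ψ (i, j) * (starRingEnd ℂ) (ψ (i, l))

theorem ptA_proj_sq_eq_kronecker {n : ℕ} (ψ : Fin n × Fin n → ℂ) :
    ptA (proj ψ) ^ 2 = (reducedA ψ)ᵀ ⊗ₖ reducedB ψ := by
  ext ⟨i, j⟩ ⟨k, l⟩
  simp only [pow_two, mul_apply, Fintype.sum_prod_type, kroneckerMap_apply, transpose_apply,
    reducedA, reducedB, ptA, proj, vecMulVec_apply, Pi.star_apply, RCLike.star_def,
    Finset.sum_mul_sum]
  rw [Finset.sum_comm]
  exact Finset.sum_congr rfl fun b _ => Finset.sum_congr rfl fun a _ => by ring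

theorem Matrix.conjTranspose_mul_self_eq_smul_one {ι 𝕜 : Type*} [Fintype ι] [DecidableEq ι]
    [Field 𝕜] [StarRing 𝕜] {A : Matrix ι ι 𝕜} {c : 𝕜} (hc : c ≠ 0) (h : A * Aᴴ = c • 1) :
    Aᴴ * A = c • 1 := by
  have : Aᴴ * (c⁻¹ • A) = 1 :=
    mul_eq_one_comm.mp (by rw [smul_mul, h, smul_smul, inv_mul_cancel₀ hc, one_smul])
  rwa [Matrix.mul_smul, inv_smul_eq_iff₀ hc] at this

theorem Matrix.pow_two_mul_of_sq_eq_smul_one {ι R : Type*} [Fintype ι] [DecidableEq ι]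
    [CommSemiring R] {N : Matrix ι ι R} {c : R} (h : N ^ 2 = c • 1) (m : ℕ) :
    N ^ (2 * m) = c ^ m • 1 := by
  rw [pow_mul, h, _root_.smul_pow, one_pow]

theorem reducedA_eq_mul_conjTranspose {n : ℕ} (ψ : Fin n × Fin n → ℂ) :
    reducedA ψ = of (Function.curry ψ) * (of (Function.curry ψ))ᴴ := rfl

theorem reducedB_eq_transpose_conjTranspose_mul {m n : ℕ} (ψ : Fin m × Fin n → ℂ) :
    reducedB ψ = ((of (Function.curry ψ))ᴴ * of (Function.curry ψ))ᵀ := by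
  ext j l
  simp only [reducedB, transpose_apply, mul_apply, conjTranspose_apply, of_apply,
    Function.curry_apply, RCLike.star_def, mul_comm]

theorem MaxEntangled.reducedB_eq {n : ℕ} {ψ : Fin n × Fin n → ℂ} (hn : (n : ℂ) ≠ 0)
    (h : MaxEntangled ψ) : reducedB ψ = (n : ℂ)⁻¹ • 1 := by
  rw [MaxEntangled, reducedA_eq_mul_conjTranspose] at h
  rw [reducedB_eq_transpose_conjTranspose_mul,
    conjTranspose_mul_self_eq_smul_one (inv_ne_zero hn) h, transpose_smul, transpose_one]

theorem MaxEntangled.ptA_proj_sq {n : ℕ} {ψ : Fin n × Fin n → ℂ} (hn : (n : ℂ) ≠ 0)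
    (h : MaxEntangled ψ) : ptA (proj ψ) ^ 2 = ((n : ℂ) ^ 2)⁻¹ • 1 := by
  rw [ptA_proj_sq_eq_kronecker, h.reducedB_eq hn, h, transpose_smul, transpose_one,
    smul_kronecker, kronecker_smul, one_kronecker_one, smul_smul, ← mul_inv, sq]

theorem trace_ptA {m n : ℕ} (ρ : Matrix (Fin m × Fin n) (Fin m × Fin n) ℂ) :
    (ptA ρ).trace = ρ.trace := rfl

theorem IsUnitVec.trace_proj {k : Type*} [Fintype k] {ψ : k → ℂ} (h : IsUnitVec ψ) :
    (proj ψ).trace = 1 := by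
  simp only [proj, trace, diag_apply, vecMulVec_apply, Pi.star_apply, RCLike.star_def,
    Complex.mul_conj, Complex.normSq_eq_norm_sq]
  exact_mod_cast h

theorem stmt8 (n : ℕ) (hn : 1 ≤ n) (ψ : Fin n × Fin n → ℂ)
    (hψ : IsUnitVec ψ) (hME : MaxEntangled ψ) (k : ℕ) (hk : 1 ≤ k) :
    Matrix.trace ((ptA (proj ψ)) ^ k) =
      (((n : ℂ) + 1) + ((n : ℂ) - 1) * (-1) ^ k) / (2 * (n : ℂ) ^ (k - 1)) := by
  have hn0 : (n : ℂ) ≠ 0 := Nat.cast_ne_zero.mpr (by omega)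
  have hpow := pow_two_mul_of_sq_eq_smul_one (hME.ptA_proj_sq hn0)
  have htr : (ptA (proj ψ)).trace = 1 := by rw [trace_ptA, hψ.trace_proj]
  obtain ⟨m, rfl | rfl⟩ : ∃ m, k = 2 * m + 1 ∨ k = 2 * (m + 1) := ⟨(k - 1) / 2, by omega⟩
  · rw [pow_succ, hpow, smul_mul, one_mul, trace_smul, htr, Odd.neg_one_pow (odd_two_mul_add_one m),
      Nat.add_sub_cancel, pow_mul, inv_pow, smul_eq_mul]
    ring
  · rw [hpow, trace_smul, trace_one, Fintype.card_prod, Fintype.card_fin,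
      Even.neg_one_pow (even_two_mul _), show 2 * (m + 1) - 1 = 2 * m + 1 by omega, smul_eq_mul,
      Nat.cast_mul, pow_succ, mul_assoc, ← sq, inv_mul_cancel₀ (pow_ne_zero 2 hn0), mul_one,
      inv_pow, pow_succ _ (2 * m), pow_mul]
    field_simp
    ring
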